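/- Both L_{6,2} and L_{6,3} contract onto the decomposable Lie algebra sa(2,ℝ) ⊕ ℝ, the 6-dimensional real Lie algebra with basis X₁,…,X₆ whose nonzero brackets are those of sa(2,ℝ) on X₁,…,X₅ and in which X₆ is central. -/

import Mathlib

open Filter Topology

/-- `IsContraction g h` : the Lie algebra `h` is a contraction of the Lie algebra `g`. -/
def IsContraction (g h : Type*) [LieRing g] [LieAlgebra ℝ g] [TopologicalSpace g]
    [LieRing h] [LieAlgebra ℝ h] : Prop :=
  ∃ (f : ℝ → (g ≃ₗ[ℝ] g)) (e : g ≃ₗ[ℝ] h), ∀ X Y : g,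
    Filter.Tendsto (fun t : ℝ => (f t).symm ⁅f t X, f t Y⁆) Filter.atTop
      (nhds (e.symm ⁅e X, e Y⁆))

/-- Structure constants of `L_{6,2}` (upper triangular part, 0-based indices). -/
def L62T {L : Type*} [AddCommGroup L] [Module ℝ L] (b : Fin 6 → L) : Fin 6 → Fin 6 → L :=
  fun i j =>
    if i = 0 ∧ j = 1 then (2 : ℝ) • b 1 else
    if i = 0 ∧ j = 2 then (-2 : ℝ) • b 2 else
    if i = 1 ∧ j = 2 then b 0 else
    if i = 0 ∧ j = 3 then b 3 else
    if i = 1 ∧ j = 4 then b 3 else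
    if i = 2 ∧ j = 3 then b 4 else
    if i = 0 ∧ j = 4 then -b 4 else
    if i = 3 ∧ j = 4 then b 5 else 0

/-- Structure constants of `L_{6,3}` (upper triangular part, 0-based indices). -/
def L63T {L : Type*} [AddCommGroup L] [Module ℝ L] (b : Fin 6 → L) : Fin 6 → Fin 6 → L :=
  fun i j =>
    if i = 0 ∧ j = 1 then (2 : ℝ) • b 1 else
    if i = 0 ∧ j = 2 then (-2 : ℝ) • b 2 else
    if i = 1 ∧ j = 2 then b 0 else
    if i = 0 ∧ j = 3 then b 3 else
    if i = 1 ∧ j = 4 then b 3 else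
    if i = 2 ∧ j = 3 then b 4 else
    if i = 0 ∧ j = 4 then -b 4 else
    if i = 3 ∧ j = 5 then b 3 else
    if i = 4 ∧ j = 5 then b 4 else 0

/-- Structure constants of the decomposable algebra `sa(2,ℝ) ⊕ ℝ`: the brackets of
`sa(2,ℝ)` on `X₁,…,X₅` while `X₆` is central (upper triangular part, 0-based). -/
def sa2PlusRT {L : Type*} [AddCommGroup L] [Module ℝ L] (b : Fin 6 → L) : Fin 6 → Fin 6 → L :=
  fun i j =>
    if i = 0 ∧ j = 1 then (2 : ℝ) • b 1 else
    if i = 0 ∧ j = 2 then (-2 : ℝ) • b 2 else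
    if i = 1 ∧ j = 2 then b 0 else
    if i = 0 ∧ j = 3 then b 3 else
    if i = 0 ∧ j = 4 then -b 4 else
    if i = 1 ∧ j = 4 then b 3 else
    if i = 2 ∧ j = 3 then b 4 else 0

/-!
Let `p` be the projection onto `ℝ X₆` along `span {X₁, …, X₅}` and `f_c = 1 - p + c • p`.
In `L_{6,2}` the vector `X₆` is central, so `f_c⁻¹ ⁅f_c X, f_c Y⁆ = (1 - p) ⁅X, Y⁆ + c⁻¹ • p ⁅X, Y⁆`,
which tends to `(1 - p) ⁅X, Y⁆` as `c → ∞`: the bracket `⁅X₄, X₅⁆ = X₆` is switched off.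
In `L_{6,3}` no bracket has an `X₆`-component, so `f_c⁻¹` fixes all brackets and
`⁅f_c X, f_c Y⁆ → ⁅(1 - p) X, (1 - p) Y⁆` as `c → 0`: the action of `X₆` is switched off.
Both limits have the structure constants of `sa(2,ℝ) ⊕ ℝ`.
-/

namespace LinearMap.IsAlt

variable {R M N ι : Type*} [CommRing R] [AddCommGroup M] [Module R M] [AddCommGroup N]
  [Module R N] [LinearOrder ι]

theorem ext_basis_of_lt (b : Module.Basis ι R M) {B B' : M →ₗ[R] M →ₗ[R] N}
    (hB : B.IsAlt) (hB' : B'.IsAlt) (h : ∀ i j, i < j → B (b i) (b j) = B' (b i) (b j)) :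
    B = B' := by
  refine LinearMap.ext_basis b b fun i j => ?_
  rcases lt_trichotomy i j with hij | rfl | hij
  · exact h i j hij
  · rw [hB.self_eq_zero, hB'.self_eq_zero]
  · rw [← hB.neg, ← hB'.neg, h j i hij]

end LinearMap.IsAlt

namespace Module.Basis

variable {R M ι : Type*} [CommRing R] [AddCommGroup M] [Module R M]

noncomputable def coordProj (b : Module.Basis ι R M) (k : ι) : Module.End R M :=
  (b.coord k).smulRight (b k)

@[simp]
theorem coordProj_apply_basis [DecidableEq ι] (b : Module.Basis ι R M) (k j : ι) :
    b.coordProj k (b j) = if j = k then b k else 0 := by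
  by_cases h : j = k
  · simp [coordProj, h]
  · simp [coordProj, h, Ne.symm h]

theorem isIdempotentElem_coordProj (b : Module.Basis ι R M) (k : ι) :
    IsIdempotentElem (b.coordProj k) := by
  ext x
  simp [coordProj]

end Module.Basis

section ScaleAlong

variable {K M : Type*} [Field K] [AddCommGroup M] [Module K M]

theorem one_sub_add_smul_mul_one_sub_add_smul {p : Module.End K M} (hp : IsIdempotentElem p)
    {c d : K} (hcd : c * d = 1) : (1 - p + c • p) * (1 - p + d • p) = 1 := by
  ext x
  have hpp : p (p x) = p x := congr($hp.eq x)
  simp only [Module.End.mul_apply, LinearMap.add_apply, LinearMap.sub_apply, LinearMap.smul_apply,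
    Module.End.one_apply, map_add, map_sub, map_smul, hpp]
  match_scalars <;> grind

def scaleAlong (p : Module.End K M) (hp : IsIdempotentElem p) (c : K) (hc : c ≠ 0) :
    M ≃ₗ[K] M :=
  .ofLinearMap (1 - p + c • p) (1 - p + c⁻¹ • p)
    (one_sub_add_smul_mul_one_sub_add_smul hp (mul_inv_cancel₀ hc))
    (one_sub_add_smul_mul_one_sub_add_smul hp (inv_mul_cancel₀ hc))

theorem scaleAlong_apply (p : Module.End K M) (hp : IsIdempotentElem p) (c : K) (hc : c ≠ 0)
    (x : M) : scaleAlong p hp c hc x = x - p x + c • p x := rfl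

theorem scaleAlong_symm_apply (p : Module.End K M) (hp : IsIdempotentElem p) (c : K)
    (hc : c ≠ 0) (x : M) : (scaleAlong p hp c hc).symm x = x - p x + c⁻¹ • p x := rfl

end ScaleAlong

namespace IsContraction

variable {L C : Type*} [LieRing L] [LieAlgebra ℝ L] [TopologicalSpace L] [ContinuousAdd L]
  [ContinuousSMul ℝ L] [LieRing C] [LieAlgebra ℝ C]

theorem of_central_idempotent (p : Module.End ℝ L) (hp : IsIdempotentElem p)
    (hcentral : ∀ X Y : L, ⁅p X, Y⁆ = 0) (e : L ≃ₗ[ℝ] C)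
    (he : ∀ X Y, e.symm ⁅e X, e Y⁆ = ⁅X, Y⁆ - p ⁅X, Y⁆) : IsContraction L C := by
  let f : ℝ → L ≃ₗ[ℝ] L := fun t => scaleAlong p hp (Real.exp t) (Real.exp_pos t).ne'
  refine ⟨f, e, fun X Y => ?_⟩
  have hcentral' : ∀ X Y : L, ⁅X, p Y⁆ = 0 := fun X Y => by rw [← lie_skew, hcentral, neg_zero]
  have hform : ∀ t, (f t).symm ⁅f t X, f t Y⁆ =
      ⁅X, Y⁆ - p ⁅X, Y⁆ + Real.exp (-t) • p ⁅X, Y⁆ := fun t => by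
    simp only [f, scaleAlong_apply, scaleAlong_symm_apply, lie_add, add_lie, lie_sub, sub_lie,
      lie_smul, smul_lie, hcentral, hcentral', smul_zero, sub_zero, add_zero, Real.exp_neg]
  have hlim := (tendsto_const_nhds (x := ⁅X, Y⁆ - p ⁅X, Y⁆)).add
    (Real.tendsto_exp_neg_atTop_nhds_zero.smul_const (p ⁅X, Y⁆))
  rw [zero_smul, add_zero] at hlim
  exact he X Y ▸ hlim.congr fun t => (hform t).symm

theorem of_idempotent_comp_lie_eq_zero (p : Module.End ℝ L) (hp : IsIdempotentElem p)
    (hder : ∀ X Y : L, p ⁅X, Y⁆ = 0) (e : L ≃ₗ[ℝ] C)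
    (he : ∀ X Y, e.symm ⁅e X, e Y⁆ = ⁅X - p X, Y - p Y⁆) : IsContraction L C := by
  let f : ℝ → L ≃ₗ[ℝ] L := fun t => scaleAlong p hp (Real.exp (-t)) (Real.exp_pos _).ne'
  refine ⟨f, e, fun X Y => ?_⟩
  have hform : ∀ t, (f t).symm ⁅f t X, f t Y⁆ =
      ⁅X - p X, Y - p Y⁆ + Real.exp (-t) • (⁅X - p X, p Y⁆ + ⁅p X, Y - p Y⁆) +
        (Real.exp (-t) * Real.exp (-t)) • ⁅p X, p Y⁆ := fun t => by
    rw [scaleAlong_symm_apply, hder, smul_zero, sub_zero, add_zero, scaleAlong_apply,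
      scaleAlong_apply]
    simp only [lie_add, add_lie, lie_smul, smul_lie, smul_add, smul_smul]
    abel
  have hc := Real.tendsto_exp_neg_atTop_nhds_zero
  have hlim := ((tendsto_const_nhds (x := ⁅X - p X, Y - p Y⁆)).add
    (hc.smul_const (⁅X - p X, p Y⁆ + ⁅p X, Y - p Y⁆))).add ((hc.mul hc).smul_const ⁅p X, p Y⁆)
  rw [zero_smul, mul_zero, zero_smul, add_zero, add_zero] at hlim
  exact he X Y ▸ hlim.congr fun t => (hform t).symm

end IsContraction

theorem LieAlgebra.symm_lie_apply_eq_of_basis {K ι L C : Type*} [CommRing K] [LinearOrder ι]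
    [LieRing L] [LieAlgebra K L] [LieRing C] [LieAlgebra K C] (b : Module.Basis ι K L)
    (e : L ≃ₗ[K] C) (B : L →ₗ[K] L →ₗ[K] L) (hB : B.IsAlt)
    (h : ∀ i j, i < j → e.symm ⁅e (b i), e (b j)⁆ = B (b i) (b j)) (X Y : L) :
    e.symm ⁅e X, e Y⁆ = B X Y := by
  let B' : L →ₗ[K] L →ₗ[K] L :=
    ((LieAlgebra.ad K C : C →ₗ[K] C →ₗ[K] C).compl₁₂ e.toLinearMap e.toLinearMap).compr₂
      e.symm.toLinearMap
  have hB' : B'.IsAlt := fun X => by simp [B']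
  have := LinearMap.IsAlt.ext_basis_of_lt b hB' hB (by simpa [B'] using h)
  simpa [B'] using LinearMap.congr_fun₂ this X Y

section Sa2PlusR

variable {A C : Type*} [LieRing A] [LieAlgebra ℝ A] [TopologicalSpace A] [ContinuousAdd A]
  [ContinuousSMul ℝ A] [LieRing C] [LieAlgebra ℝ C]

theorem isContraction_sa2PlusR_of_L62 (bA : Module.Basis (Fin 6) ℝ A)
    (hA : ∀ i j : Fin 6, i < j → ⁅bA i, bA j⁆ = L62T (⇑bA) i j) (bC : Module.Basis (Fin 6) ℝ C)
    (hC : ∀ i j : Fin 6, i < j → ⁅bC i, bC j⁆ = sa2PlusRT (⇑bC) i j) : IsContraction A C := by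
  have hcentral : ∀ X Y : A, ⁅bA.coordProj 5 X, Y⁆ = 0 := by
    have had : LieAlgebra.ad ℝ A (bA 5) = 0 := bA.ext fun j => by
      by_cases h : j = 5
      · simp [h]
      · simp [← lie_skew (bA 5), hA j 5 (lt_of_le_of_ne (Fin.le_last j) h), L62T]
    intro X Y
    simp [Module.Basis.coordProj, show ⁅bA 5, Y⁆ = 0 from LinearMap.congr_fun had Y]
  refine .of_central_idempotent _ (bA.isIdempotentElem_coordProj 5) hcentral
    (bA.equiv bC (.refl _)) (LieAlgebra.symm_lie_apply_eq_of_basis bA _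
      ((LieAlgebra.ad ℝ A : A →ₗ[ℝ] A →ₗ[ℝ] A).compr₂ (1 - bA.coordProj 5)) (fun X => by simp)
      fun i j hij => ?_)
  simp only [Module.Basis.equiv_apply, Equiv.refl_apply, hC i j hij, LinearMap.compr₂_apply,
    LieHom.coe_toLinearMap, LieAlgebra.ad_apply, LinearMap.sub_apply, Module.End.one_apply,
    hA i j hij]
  fin_cases i <;> fin_cases j <;>
    simp [L62T, sa2PlusRT, Module.Basis.equiv_symm, Module.Basis.equiv_apply] at hij ⊢

theorem isContraction_sa2PlusR_of_L63 (bB : Module.Basis (Fin 6) ℝ A)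
    (hB : ∀ i j : Fin 6, i < j → ⁅bB i, bB j⁆ = L63T (⇑bB) i j) (bC : Module.Basis (Fin 6) ℝ C)
    (hC : ∀ i j : Fin 6, i < j → ⁅bC i, bC j⁆ = sa2PlusRT (⇑bC) i j) : IsContraction A C := by
  have hder : ∀ X Y : A, bB.coordProj 5 ⁅X, Y⁆ = 0 := by
    have h := LinearMap.IsAlt.ext_basis_of_lt bB (B' := 0)
      (B := (LieAlgebra.ad ℝ A : A →ₗ[ℝ] A →ₗ[ℝ] A).compr₂ (bB.coordProj 5)) (fun X => by simp)
      (fun _ => rfl) fun i j hij => by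
        simp only [LinearMap.compr₂_apply, LieHom.coe_toLinearMap, LieAlgebra.ad_apply,
          hB i j hij, LinearMap.zero_apply]
        fin_cases i <;> fin_cases j <;> simp [L63T]
    intro X Y
    simpa using LinearMap.congr_fun₂ h X Y
  refine .of_idempotent_comp_lie_eq_zero _ (bB.isIdempotentElem_coordProj 5) hder
    (bB.equiv bC (.refl _)) (LieAlgebra.symm_lie_apply_eq_of_basis bB _
      ((LieAlgebra.ad ℝ A : A →ₗ[ℝ] A →ₗ[ℝ] A).compl₁₂ (1 - bB.coordProj 5) (1 - bB.coordProj 5))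
      (fun X => by simp) fun i j hij => ?_)
  simp only [Module.Basis.equiv_apply, Equiv.refl_apply, hC i j hij, LinearMap.compl₁₂_apply,
    LieHom.coe_toLinearMap, LieAlgebra.ad_apply, LinearMap.sub_apply, Module.End.one_apply]
  fin_cases i <;> fin_cases j <;>
    simp [L63T, sa2PlusRT, hB, Module.Basis.equiv_symm, Module.Basis.equiv_apply] at hij ⊢

end Sa2PlusR

theorem L62_L63_contract_onto_sa2_plus_R_general
    (A : Type) [LieRing A] [LieAlgebra ℝ A]
    [TopologicalSpace A] [IsTopologicalAddGroup A] [ContinuousSMul ℝ A]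
    (bA : Module.Basis (Fin 6) ℝ A) (hA : ∀ i j : Fin 6, i < j → ⁅bA i, bA j⁆ = L62T (⇑bA) i j)
    (B : Type) [LieRing B] [LieAlgebra ℝ B]
    [TopologicalSpace B] [IsTopologicalAddGroup B] [ContinuousSMul ℝ B]
    (bB : Module.Basis (Fin 6) ℝ B) (hB : ∀ i j : Fin 6, i < j → ⁅bB i, bB j⁆ = L63T (⇑bB) i j)
    (C : Type) [LieRing C] [LieAlgebra ℝ C]
    (bC : Module.Basis (Fin 6) ℝ C) (hC : ∀ i j : Fin 6, i < j → ⁅bC i, bC j⁆ = sa2PlusRT (⇑bC) i j) :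
    IsContraction A C ∧ IsContraction B C :=
  ⟨isContraction_sa2PlusR_of_L62 bA hA bC hC, isContraction_sa2PlusR_of_L63 bB hB bC hC⟩

/-- Both `L_{6,2}` and `L_{6,3}` contract onto `sa(2,ℝ) ⊕ ℝ`. -/
theorem L62_L63_contract_onto_sa2_plus_R
    (A : Type) [LieRing A] [LieAlgebra ℝ A]
    [TopologicalSpace A] [IsTopologicalAddGroup A] [ContinuousSMul ℝ A] [T2Space A]
    (bA : Module.Basis (Fin 6) ℝ A) (hA : ∀ i j : Fin 6, i < j → ⁅bA i, bA j⁆ = L62T (⇑bA) i j)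
    (B : Type) [LieRing B] [LieAlgebra ℝ B]
    [TopologicalSpace B] [IsTopologicalAddGroup B] [ContinuousSMul ℝ B] [T2Space B]
    (bB : Module.Basis (Fin 6) ℝ B) (hB : ∀ i j : Fin 6, i < j → ⁅bB i, bB j⁆ = L63T (⇑bB) i j)
    (C : Type) [LieRing C] [LieAlgebra ℝ C]
    (bC : Module.Basis (Fin 6) ℝ C) (hC : ∀ i j : Fin 6, i < j → ⁅bC i, bC j⁆ = sa2PlusRT (⇑bC) i j) :
    IsContraction A C ∧ IsContraction B C :=
  L62_L63_contract_onto_sa2_plus_R_general A bA hA B bB hB C bC hC
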